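/- Let G_ω be an increasing weighted tree on at least 2 vertices. Then the degree of the least common multiple of the minimal generators of the edge ideal I(G_ω) equals d + Σ_{e ∈ E(G)} ω(e), where d = max{ω(e) : e ∈ E(G)}. -/
import Mathlib


open MvPolynomial SimpleGraph

/-- The weight function `ω` on the edges of `G` is weakly increasing along every
simple path from a leaf to the root `r`. -/
def IsIncreasingRoot {n : ℕ} (G : SimpleGraph (Fin n)) [DecidableRel G.Adj]
    (ω : Sym2 (Fin n) → ℕ) (r : Fin n) : Prop :=
  ∀ v : Fin n, G.degree v = 1 → ∀ p : G.Walk v r, p.IsPath →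
    ∀ i : ℕ, i + 2 < p.support.length →
      ω s(p.support.getD i v, p.support.getD (i + 1) v) ≤
        ω s(p.support.getD (i + 1) v, p.support.getD (i + 2) v)

/-- The weight function `ω` is strictly increasing along every simple path from a leaf
to the root `r`. -/
def IsStrictlyIncreasingRoot {n : ℕ} (G : SimpleGraph (Fin n)) [DecidableRel G.Adj]
    (ω : Sym2 (Fin n) → ℕ) (r : Fin n) : Prop :=
  ∀ v : Fin n, G.degree v = 1 → ∀ p : G.Walk v r, p.IsPath →
    ∀ i : ℕ, i + 2 < p.support.length →
      ω s(p.support.getD i v, p.support.getD (i + 1) v) <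
        ω s(p.support.getD (i + 1) v, p.support.getD (i + 2) v)

/-- A vertex `v₂` is special: there is a simple path `v₁ → v₂ → v₃ → ⋯ → r` from a leaf `v₁`
of length at least 2 with `ω(v₁v₂) = ω(v₂v₃)`. -/
def IsSpecialVertex {n : ℕ} (G : SimpleGraph (Fin n)) [DecidableRel G.Adj]
    (ω : Sym2 (Fin n) → ℕ) (r : Fin n) (v₂ : Fin n) : Prop :=
  ∃ (v₁ : Fin n) (p : G.Walk v₁ r), G.degree v₁ = 1 ∧ p.IsPath ∧ 2 ≤ p.length ∧
    p.support.getD 1 v₁ = v₂ ∧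
    ω s(p.support.getD 0 v₁, p.support.getD 1 v₁) =
      ω s(p.support.getD 1 v₁, p.support.getD 2 v₁)

/-- An edge `uv` is special: there is a simple path `v₁ → u → v → ⋯ → r` (at least 3 vertices)
with `ω(v₁u) = ω(uv)`. -/
def IsSpecialEdge {n : ℕ} (G : SimpleGraph (Fin n))
    (ω : Sym2 (Fin n) → ℕ) (r : Fin n) (e : Sym2 (Fin n)) : Prop :=
  ∃ (v₁ : Fin n) (p : G.Walk v₁ r), p.IsPath ∧ 2 ≤ p.length ∧
    e = s(p.support.getD 1 v₁, p.support.getD 2 v₁) ∧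
    ω s(p.support.getD 0 v₁, p.support.getD 1 v₁) =
      ω s(p.support.getD 1 v₁, p.support.getD 2 v₁)

/-- `μ(v)`: the maximal weight of an edge at `v`. -/
def muWeight {n : ℕ} (G : SimpleGraph (Fin n)) [DecidableRel G.Adj]
    (ω : Sym2 (Fin n) → ℕ) (v : Fin n) : ℕ :=
  (G.neighborFinset v).sup fun u => ω s(u, v)

/-- The set `A(G_ω)` of vertices admitting a simple path `v = v₁ → ⋯ → v_{2m}` (`m ≥ 1`)
with `ω(v_{2m-1}v_{2m}) < μ(v_{2m})`. -/
def Aset {n : ℕ} (G : SimpleGraph (Fin n)) [DecidableRel G.Adj]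
    (ω : Sym2 (Fin n) → ℕ) : Set (Fin n) :=
  {v | ∃ (m : ℕ) (w : Fin n) (p : G.Walk v w), 1 ≤ m ∧ p.IsPath ∧
    p.support.length = 2 * m ∧
    ω s(p.support.getD (2 * m - 2) v, w) < muWeight G ω w}

/-- The exponent vector of the monomial generator `(x_i x_j)^{ω(e)}` attached to an
edge `e = {i, j}`; the lcm of a set of such monomials has exponent vector the
pointwise sup (`Finset.sup`) of the exponent vectors. -/
def edgeExp {n : ℕ} (ω : Sym2 (Fin n) → ℕ) (e : Sym2 (Fin n)) : Fin n → ℕ :=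
  fun x => if x ∈ e then ω e else 0


lemma getD_support_eq_getVert {V : Type*} {G : SimpleGraph V} {a b : V} (p : G.Walk a b)
    (i : ℕ) (d : V) : p.support.getD i d = if i ≤ p.length then p.getVert i else d := by
  induction p generalizing i with
  | nil => cases i <;> simp [SimpleGraph.Walk.support_nil]
  | cons h q ih =>
    cases i with
    | zero => simp
    | succ j =>
      simp only [SimpleGraph.Walk.support_cons, List.getD_cons_succ,
        SimpleGraph.Walk.getVert_cons_succ, SimpleGraph.Walk.length_cons, ih,
        Nat.succ_le_succ_iff]

lemma adj_mem_support_eq_getVert_one {V : Type*} [DecidableEq V] {G : SimpleGraph V}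
    (htree : G.IsTree) {v w b : V} (p : G.Walk v b) (hp : p.IsPath)
    (hadj : G.Adj v w) (hmem : w ∈ p.support) : w = p.getVert 1 := by
  have hedge : (SimpleGraph.Walk.cons hadj SimpleGraph.Walk.nil : G.Walk v w).IsPath := by
    simp [hadj.ne]
  have htu := hp.takeUntil hmem
  have hequ : p.takeUntil w hmem = SimpleGraph.Walk.cons hadj SimpleGraph.Walk.nil :=
    (htree.existsUnique_path v w).unique htu hedge
  have hspec := p.take_spec hmem
  rw [hequ] at hspec
  rw [← hspec]
  simp [SimpleGraph.Walk.getVert_append]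

open SimpleGraph Walk in
lemma extend_to_leaf {n : ℕ} {G : SimpleGraph (Fin n)} [DecidableRel G.Adj]
    (htree : G.IsTree) {r : Fin n} :
    ∀ (k : ℕ) {v : Fin n} (p : G.Walk v r), p.IsPath → 1 ≤ p.length → n ≤ p.length + k →
    ∃ (u : Fin n) (q : G.Walk u r) (pre : G.Walk u v),
      q.IsPath ∧ G.degree u = 1 ∧ q = pre.append p := by
  intro k
  induction k with
  | zero =>
    intro v p hp h1 hk
    have := hp.length_lt
    simp only [Fintype.card_fin] at this
    omega
  | succ k ih =>
    intro v p hp h1 hk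
    by_cases hex : ∃ w ∈ G.neighborFinset v, w ∉ p.support
    · obtain ⟨w, hw, hwn⟩ := hex
      rw [SimpleGraph.mem_neighborFinset] at hw
      have hp' : (Walk.cons hw.symm p).IsPath := by rw [Walk.cons_isPath_iff]; exact ⟨hp, hwn⟩
      obtain ⟨u, q, pre, hq, hdeg, heq⟩ := ih (Walk.cons hw.symm p) hp'
        (by simp) (by simp only [Walk.length_cons]; omega)
      refine ⟨u, q, pre.append (Walk.cons hw.symm Walk.nil), hq, hdeg, ?_⟩
      rw [heq, ← Walk.append_assoc, Walk.cons_nil_append]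
    · push_neg at hex
      have hnb : G.neighborFinset v = {p.getVert 1} := by
        ext w
        simp only [SimpleGraph.mem_neighborFinset, Finset.mem_singleton]
        constructor
        · intro hadj
          exact adj_mem_support_eq_getVert_one htree p hp hadj
            (hex w (by rw [SimpleGraph.mem_neighborFinset]; exact hadj))
        · rintro rfl
          have := p.adj_getVert_succ (i := 0) (by omega)
          rwa [Walk.getVert_zero] at this
      refine ⟨v, p, Walk.nil, hp, ?_, by simp⟩
      rw [← SimpleGraph.card_neighborFinset_eq_degree, hnb, Finset.card_singleton]

open SimpleGraph Walk in
lemma mono_step {n : ℕ} {G : SimpleGraph (Fin n)} [DecidableRel G.Adj]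
    {ω : Sym2 (Fin n) → ℕ} {r : Fin n} (htree : G.IsTree)
    (hinc : IsIncreasingRoot G ω r) {v : Fin n} (p : G.Walk v r) (hp : p.IsPath) :
    ∀ i, i + 2 ≤ p.length →
      ω s(p.getVert i, p.getVert (i + 1)) ≤ ω s(p.getVert (i + 1), p.getVert (i + 2)) := by
  intro i hi
  obtain ⟨u, q, pre, hq, hdeg, heq⟩ := extend_to_leaf htree n p hp (by omega) (by omega)
  have hql : q.length = pre.length + p.length := by rw [heq, Walk.length_append]
  have hg : ∀ j, j ≤ p.length → q.getVert (pre.length + j) = p.getVert j := by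
    intro j hj
    rw [heq, Walk.getVert_append, if_neg (by omega), Nat.add_sub_cancel_left]
  have hcond : pre.length + i + 2 < q.support.length := by
    rw [Walk.length_support]; omega
  have H := hinc u hdeg q hq (pre.length + i) hcond
  rw [getD_support_eq_getVert, getD_support_eq_getVert, getD_support_eq_getVert,
    if_pos (by omega), if_pos (by omega), if_pos (by omega)] at H
  have e0 : q.getVert (pre.length + i) = p.getVert i := hg i (by omega)
  have e1 : q.getVert (pre.length + i + 1) = p.getVert (i + 1) := hg (i + 1) (by omega)
  have e2 : q.getVert (pre.length + i + 2) = p.getVert (i + 2) := hg (i + 2) (by omega)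
  rwa [e0, e1, e2] at H

open SimpleGraph Walk in
lemma mono_trans {n : ℕ} {G : SimpleGraph (Fin n)} [DecidableRel G.Adj]
    {ω : Sym2 (Fin n) → ℕ} {r : Fin n} (htree : G.IsTree)
    (hinc : IsIncreasingRoot G ω r) {v : Fin n} (p : G.Walk v r) (hp : p.IsPath) :
    ∀ i j, i ≤ j → j + 1 ≤ p.length →
      ω s(p.getVert i, p.getVert (i + 1)) ≤ ω s(p.getVert j, p.getVert (j + 1)) := by
  intro i j
  induction j with
  | zero =>
    intro hij _
    obtain rfl : i = 0 := by omega
    exact le_rfl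
  | succ j ih =>
    intro hij hj
    rcases Nat.lt_or_ge i (j + 1) with h | h
    · exact (ih (by omega) (by omega)).trans (mono_step htree hinc p hp j (by omega))
    · obtain rfl : i = j + 1 := by omega
      exact le_rfl

/-- **Lemma.** Let `G_ω` be an increasing weighted tree on `n ≥ 2` vertices. Then the degree
of the lcm of the minimal generators of `I(G_ω)` (the total degree of the pointwise sup of
all the generators' exponent vectors) equals `d + Σ_{e ∈ E(G)} ω(e)`, where
`d = max{ω(e) : e ∈ E(G)}`. -/
theorem deg_lcm_generators {n : ℕ} (G : SimpleGraph (Fin n))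
    [DecidableRel G.Adj] (ω : Sym2 (Fin n) → ℕ)
    (hn : 2 ≤ n) (htree : G.IsTree) (hpos : ∀ e ∈ G.edgeSet, 1 ≤ ω e)
    (hroot : ∃ r : Fin n, IsIncreasingRoot G ω r) :
    ∑ x : Fin n, (G.edgeFinset.sup (edgeExp ω)) x =
      G.edgeFinset.sup ω + ∑ e ∈ G.edgeFinset, ω e := by
  classical
  obtain ⟨r, hinc⟩ := hroot
  choose P hP hPu using fun v => htree.existsUnique_path v r
  have hPr : P r = Walk.nil := (hPu r Walk.nil SimpleGraph.Walk.IsPath.nil).symm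
  set par : Fin n → Fin n := fun v => (P v).getVert 1 with hpar
  have hne1 : ∀ v, v ≠ r → 1 ≤ (P v).length := by
    intro v hv
    by_contra h
    exact hv (SimpleGraph.Walk.eq_of_length_eq_zero (p := P v) (by omega))
  have hadjpar : ∀ v, v ≠ r → G.Adj v (par v) := by
    intro v hv
    have := (P v).adj_getVert_succ (i := 0) (by have := hne1 v hv; omega)
    rwa [SimpleGraph.Walk.getVert_zero] at this
  have hlen : ∀ v, v ≠ r → (P v).length = (P (par v)).length + 1 := by
    intro v hv
    cases hpv : P v with
    | nil => exact absurd rfl hv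
    | cons h q =>
      rename_i u
      have hq : q.IsPath := by
        have := hP v; rw [hpv, SimpleGraph.Walk.cons_isPath_iff] at this; exact this.1
      have hqe : q = P u := hPu u q hq
      have hu : par v = u := by
        show (P v).getVert 1 = u
        rw [hpv]
        simp [SimpleGraph.Walk.getVert_cons_succ]
      rw [SimpleGraph.Walk.length_cons, hu, ← hqe]
  -- membership helper
  have hsym2 : ∀ (e : Sym2 (Fin n)) (v : Fin n), v ∈ e → ∃ u, e = s(v, u) := by
    intro e
    induction e using Sym2.ind with
    | _ a b =>
      intro v hv
      rcases Sym2.mem_iff.mp hv with rfl | rfl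
      · exact ⟨b, rfl⟩
      · exact ⟨a, Sym2.eq_swap.symm⟩
  -- Claim A
  have hA : ∀ v, v ≠ r → (G.edgeFinset.sup (edgeExp ω)) v = ω s(v, par v) := by
    intro v hv
    rw [Finset.sup_apply]
    apply le_antisymm
    · apply Finset.sup_le
      intro e he
      simp only [edgeExp]
      split_ifs with hmem
      · obtain ⟨u, rfl⟩ := hsym2 e v hmem
        have hadj : G.Adj v u := by
          rwa [SimpleGraph.mem_edgeFinset, SimpleGraph.mem_edgeSet] at he
        by_cases hu : u = par v
        · rw [hu]
        · have hns : u ∉ (P v).support := by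
            intro hmem'
            exact hu (adj_mem_support_eq_getVert_one htree (P v) (hP v) hadj hmem')
          have hq : (Walk.cons hadj.symm (P v)).IsPath := by
            rw [SimpleGraph.Walk.cons_isPath_iff]; exact ⟨hP v, hns⟩
          have H := mono_step htree hinc (Walk.cons hadj.symm (P v)) hq 0
            (by simp only [SimpleGraph.Walk.length_cons]; have := hne1 v hv; omega)
          simp only [SimpleGraph.Walk.getVert_zero, SimpleGraph.Walk.getVert_cons_succ] at H
          rw [Sym2.eq_swap] at H
          exact H
      · exact Nat.zero_le _
    · have hmem : s(v, par v) ∈ G.edgeFinset := by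
        rw [SimpleGraph.mem_edgeFinset, SimpleGraph.mem_edgeSet]; exact hadjpar v hv
      have := Finset.le_sup (f := fun e => edgeExp ω e v) hmem
      simpa [edgeExp] using this
  -- first-edge bound
  have hLB : ∀ (x : Fin n) (q : G.Walk x r), q.IsPath → 1 ≤ q.length →
      ω s(q.getVert 0, q.getVert 1) ≤ (G.edgeFinset.sup (edgeExp ω)) r := by
    intro x q hq h1
    have hr : q.getVert (q.length - 1 + 1) = r := by
      rw [show q.length - 1 + 1 = q.length by omega, SimpleGraph.Walk.getVert_length]
    have hadj : G.Adj (q.getVert (q.length - 1)) r := by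
      have := q.adj_getVert_succ (i := q.length - 1) (by omega)
      rwa [hr] at this
    have hmem : s(q.getVert (q.length - 1), r) ∈ G.edgeFinset := by
      rw [SimpleGraph.mem_edgeFinset, SimpleGraph.mem_edgeSet]; exact hadj
    calc ω s(q.getVert 0, q.getVert 1)
        ≤ ω s(q.getVert (q.length - 1), q.getVert (q.length - 1 + 1)) :=
          mono_trans htree hinc q hq 0 (q.length - 1) (by omega) (by omega)
      _ ≤ _ := by
          rw [hr, Finset.sup_apply]
          have := Finset.le_sup (f := fun e => edgeExp ω e r) hmem
          simpa [edgeExp] using this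
  -- Claim B
  have hB : (G.edgeFinset.sup (edgeExp ω)) r = G.edgeFinset.sup ω := by
    apply le_antisymm
    · rw [Finset.sup_apply]
      apply Finset.sup_le
      intro e he
      simp only [edgeExp]
      split_ifs
      · exact Finset.le_sup he
      · exact Nat.zero_le _
    · apply Finset.sup_le
      intro e he
      revert he
      induction e using Sym2.ind with
      | _ a b =>
        intro he
        have hadj : G.Adj a b := by
          rwa [SimpleGraph.mem_edgeFinset, SimpleGraph.mem_edgeSet] at he
        by_cases har : a = r
        · subst har
          rw [Finset.sup_apply]
          have := Finset.le_sup (f := fun e => edgeExp ω e a) he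
          simpa [edgeExp] using this
        · by_cases hbs : b ∈ (P a).support
          · have hb : b = (P a).getVert 1 :=
              adj_mem_support_eq_getVert_one htree (P a) (hP a) hadj hbs
            have := hLB a (P a) (hP a) (hne1 a har)
            rwa [SimpleGraph.Walk.getVert_zero, ← hb] at this
          · have hq : (Walk.cons hadj.symm (P a)).IsPath := by
              rw [SimpleGraph.Walk.cons_isPath_iff]; exact ⟨hP a, hbs⟩
            have := hLB b _ hq (by simp)
            simp only [SimpleGraph.Walk.getVert_zero,
              SimpleGraph.Walk.getVert_cons_succ] at this
            rwa [Sym2.eq_swap] at this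
  -- sum over non-root vertices
  have hbij : ∑ x ∈ Finset.univ.erase r, (G.edgeFinset.sup (edgeExp ω)) x
      = ∑ e ∈ G.edgeFinset, ω e := by
    refine Finset.sum_bij (fun x _ => s(x, par x)) ?_ ?_ ?_ ?_
    · intro a ha
      rw [SimpleGraph.mem_edgeFinset, SimpleGraph.mem_edgeSet]
      exact hadjpar a (Finset.mem_erase.mp ha).1
    · intro a ha b hb hab
      rcases Sym2.eq_iff.mp hab with ⟨h1, _⟩ | ⟨h1, h2⟩
      · exact h1
      · exfalso
        have ha' := hlen a (Finset.mem_erase.mp ha).1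
        have hb' := hlen b (Finset.mem_erase.mp hb).1
        rw [h2] at ha'
        rw [← h1] at hb'
        omega
    · intro e he
      revert he
      induction e using Sym2.ind with
      | _ a b =>
        intro he
        have hadj : G.Adj a b := by
          rwa [SimpleGraph.mem_edgeFinset, SimpleGraph.mem_edgeSet] at he
        by_cases hbs : b ∈ (P a).support
        · have har : a ≠ r := by
            rintro rfl
            rw [hPr] at hbs
            simp only [SimpleGraph.Walk.support_nil, List.mem_singleton] at hbs
            exact hadj.ne hbs.symm
          have hb : b = par a :=
            adj_mem_support_eq_getVert_one htree (P a) (hP a) hadj hbs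
          exact ⟨a, Finset.mem_erase.mpr ⟨har, Finset.mem_univ a⟩, by
            show s(a, par a) = s(a, b); rw [← hb]⟩
        · have hbr : b ≠ r := fun h => hbs (h ▸ (P a).end_mem_support)
          have hq : (Walk.cons hadj.symm (P a)).IsPath := by
            rw [SimpleGraph.Walk.cons_isPath_iff]; exact ⟨hP a, hbs⟩
          have hQP : Walk.cons hadj.symm (P a) = P b := hPu b _ hq
          have hpb : par b = a := by
            show (P b).getVert 1 = a
            rw [← hQP]
            simp [SimpleGraph.Walk.getVert_cons_succ]
          refine ⟨b, Finset.mem_erase.mpr ⟨hbr, Finset.mem_univ b⟩, ?_⟩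
          show s(b, par b) = s(a, b)
          rw [hpb, Sym2.eq_swap]
    · intro a ha
      exact hA a (Finset.mem_erase.mp ha).1
  rw [← Finset.add_sum_erase _ _ (Finset.mem_univ r), hB, hbij]
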